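/- arXiv:2604.15879 — 6 statements merged into one kernel-verified Lean document; each statement's English description precedes it below -/
import Mathlib

section
/- For every p ∈ (1,∞) there exists a positive constant C₁ depending only on p such that for every dimension d ∈ ℕ, all vectors y, z ∈ ℝ^d and every real a ≥ 0, one has |(a² + |y|²)^{(p−2)/2} y − (a² + |z|²)^{(p−2)/2} z| ≤ C₁ (a + |y| + |z|)^{p−2} |y − z|. -/
/-!
Write `A x = (a² + ‖x‖²)^β • x` with `β = (p - 2)/2`, and `M = a + ‖y‖ + ‖z‖`.
If `‖y - z‖ ≥ M / 4`, the crude bound `‖A x‖ ≤ (a + ‖x‖)^(p - 1) ≤ M^(p - 1)` for `x = y, z`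
suffices. Otherwise `s = a² + ‖y‖²` and `t = a² + ‖z‖²` both lie in `[M²/16, M²]`, on which
`x^γ ≤ 16^|γ| (M²)^γ` for every exponent `γ`. Splitting
`A y - A z = s^β • (y - z) + (s^β - t^β) • z`, the first term is controlled directly and the
second by the mean value theorem for `x ↦ x^β` on that interval, using `|s - t| ≤ M ‖y - z‖`.
-/

open Set

namespace Real

lemma rpow_le_rpow_mul_of_mem_Icc {K u x : ℝ} (γ : ℝ) (hK : 1 ≤ K) (hu : 0 < u)
    (hx : x ∈ Icc (u / K) u) : x ^ γ ≤ K ^ |γ| * u ^ γ := by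
  have hK0 : 0 < K := one_pos.trans_le hK
  have hx0 : 0 < x := (div_pos hu hK0).trans_le hx.1
  rcases le_total 0 γ with hγ | hγ
  · calc x ^ γ ≤ u ^ γ := rpow_le_rpow hx0.le hx.2 hγ
      _ ≤ K ^ |γ| * u ^ γ :=
        le_mul_of_one_le_left (rpow_nonneg hu.le _) (one_le_rpow hK (abs_nonneg γ))
  · calc x ^ γ ≤ (u / K) ^ γ := rpow_le_rpow_of_nonpos (div_pos hu hK0) hx.1 hγ
      _ = K ^ |γ| * u ^ γ := by
        rw [div_rpow hu.le hK0.le, abs_of_nonpos hγ, rpow_neg hK0.le, div_eq_inv_mul]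

lemma abs_rpow_sub_rpow_le_of_mem_Icc {K u s t : ℝ} (β : ℝ) (hK : 1 ≤ K) (hu : 0 < u)
    (hs : s ∈ Icc (u / K) u) (ht : t ∈ Icc (u / K) u) :
    |s ^ β - t ^ β| ≤ |β| * K ^ |β - 1| * u ^ (β - 1) * |s - t| := by
  have hpos : ∀ x ∈ Icc (u / K) u, 0 < x := fun x hx =>
    (div_pos hu (one_pos.trans_le hK)).trans_le hx.1
  refine (convex_Icc _ _).norm_image_sub_le_of_norm_deriv_le (f := fun x : ℝ => x ^ β)
    (fun x hx => (hasDerivAt_rpow_const (Or.inl (hpos x hx).ne')).differentiableAt)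
    (fun x hx => ?_) ht hs
  rw [deriv_rpow_const, norm_mul, norm_eq_abs, norm_eq_abs,
    abs_of_pos (rpow_pos_of_pos (hpos x hx) _), mul_assoc]
  exact mul_le_mul_of_nonneg_left (rpow_le_rpow_mul_of_mem_Icc _ hK hu hx) (abs_nonneg β)

end Real

open Real

lemma sq_rpow_half {M : ℝ} (hM : 0 ≤ M) (γ : ℝ) : (M ^ 2) ^ (γ / 2) = M ^ γ := by
  rw [← rpow_natCast, ← rpow_mul hM, Nat.cast_ofNat, mul_div_cancel₀ γ two_ne_zero]

lemma rpow_mul_le_add_rpow {a r p : ℝ} (ha : 0 ≤ a) (hr : 0 ≤ r) (hp : 1 ≤ p) :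
    (a ^ 2 + r ^ 2) ^ ((p - 2) / 2) * r ≤ (a + r) ^ (p - 1) := by
  rcases hr.eq_or_lt with rfl | hr
  · simpa using rpow_nonneg ha _
  rcases le_total 2 p with hp2 | hp2
  · have hsq : (a ^ 2 + r ^ 2) ^ ((p - 2) / 2) ≤ (a + r) ^ (p - 2) := by
      calc (a ^ 2 + r ^ 2) ^ ((p - 2) / 2) ≤ ((a + r) ^ 2) ^ ((p - 2) / 2) :=
            rpow_le_rpow (by positivity) (by nlinarith) (by linarith)
        _ = (a + r) ^ (p - 2) := sq_rpow_half (by positivity) _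
    calc (a ^ 2 + r ^ 2) ^ ((p - 2) / 2) * r ≤ (a + r) ^ (p - 2) * (a + r) :=
          mul_le_mul hsq (by linarith) hr.le (by positivity)
      _ = (a + r) ^ (p - 1) := by
        rw [← rpow_add_one (by positivity : a + r ≠ 0)]; congr 1; ring
  · have hsq : (a ^ 2 + r ^ 2) ^ ((p - 2) / 2) ≤ r ^ (p - 2) := by
      calc (a ^ 2 + r ^ 2) ^ ((p - 2) / 2) ≤ (r ^ 2) ^ ((p - 2) / 2) :=
            rpow_le_rpow_of_nonpos (by positivity) (by nlinarith) (by linarith)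
        _ = r ^ (p - 2) := sq_rpow_half hr.le _
    calc (a ^ 2 + r ^ 2) ^ ((p - 2) / 2) * r ≤ r ^ (p - 2) * r :=
          mul_le_mul_of_nonneg_right hsq hr.le
      _ = r ^ (p - 1) := by rw [← rpow_add_one hr.ne']; congr 1; ring
      _ ≤ (a + r) ^ (p - 1) := rpow_le_rpow hr.le (by linarith) (by linarith)

lemma sq_add_sq_mem_Icc {a r q : ℝ} (ha : 0 ≤ a) (hr : 0 ≤ r) (hq : 0 ≤ q)
    (h : 4 * (r - q) ≤ a + r + q) :
    a ^ 2 + q ^ 2 ∈ Icc ((a + r + q) ^ 2 / 16) ((a + r + q) ^ 2) := by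
  constructor
  · nlinarith [sq_nonneg (2 * a - q), sq_nonneg (a - q)]
  · nlinarith [mul_nonneg ha hr, mul_nonneg ha hq, mul_nonneg hr hq]

section

variable {E : Type*} [NormedAddCommGroup E] [NormedSpace ℝ E]

noncomputable def pLaplaceMap (p a : ℝ) (x : E) : E := (a ^ 2 + ‖x‖ ^ 2) ^ ((p - 2) / 2) • x

lemma norm_pLaplaceMap (p a : ℝ) (x : E) :
    ‖pLaplaceMap p a x‖ = (a ^ 2 + ‖x‖ ^ 2) ^ ((p - 2) / 2) * ‖x‖ := by
  rw [pLaplaceMap, norm_smul, norm_of_nonneg (rpow_nonneg (by positivity) _)]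

lemma norm_pLaplaceMap_sub_le_of_far {p a : ℝ} (hp : 1 ≤ p) (ha : 0 ≤ a) {y z : E}
    (hM : 0 < a + ‖y‖ + ‖z‖) (hfar : a + ‖y‖ + ‖z‖ ≤ 4 * ‖y - z‖) :
    ‖pLaplaceMap p a y - pLaplaceMap p a z‖ ≤ 8 * (a + ‖y‖ + ‖z‖) ^ (p - 2) * ‖y - z‖ := by
  set M := a + ‖y‖ + ‖z‖
  have hbound : ∀ x : E, a + ‖x‖ ≤ M → ‖pLaplaceMap p a x‖ ≤ M ^ (p - 2) * M := by
    intro x hx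
    rw [norm_pLaplaceMap, ← rpow_add_one hM.ne', show p - 2 + 1 = p - 1 by ring]
    exact (rpow_mul_le_add_rpow ha (norm_nonneg x) hp).trans
      (rpow_le_rpow (by positivity) hx (by linarith))
  calc ‖pLaplaceMap p a y - pLaplaceMap p a z‖
      ≤ ‖pLaplaceMap p a y‖ + ‖pLaplaceMap p a z‖ := norm_sub_le _ _
    _ ≤ M ^ (p - 2) * M + M ^ (p - 2) * M :=
      add_le_add (hbound y (by simp only [M]; linarith [norm_nonneg z]))
        (hbound z (by simp only [M]; linarith [norm_nonneg y]))
    _ ≤ 8 * M ^ (p - 2) * ‖y - z‖ := by nlinarith [rpow_nonneg hM.le (p - 2)]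

lemma norm_pLaplaceMap_sub_le_of_near (p : ℝ) {a : ℝ} (ha : 0 ≤ a) {y z : E}
    (hM : 0 < a + ‖y‖ + ‖z‖) (hnear : 4 * ‖y - z‖ ≤ a + ‖y‖ + ‖z‖) :
    ‖pLaplaceMap p a y - pLaplaceMap p a z‖ ≤
      (16 ^ |(p - 2) / 2| + |(p - 2) / 2| * 16 ^ |(p - 2) / 2 - 1|) *
        (a + ‖y‖ + ‖z‖) ^ (p - 2) * ‖y - z‖ := by
  set β := (p - 2) / 2
  set M := a + ‖y‖ + ‖z‖
  set s := a ^ 2 + ‖y‖ ^ 2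
  set t := a ^ 2 + ‖z‖ ^ 2
  set e := ‖y - z‖
  have hyz : |‖y‖ - ‖z‖| ≤ e := abs_norm_sub_norm_le y z
  have hu : 0 < M ^ 2 := by positivity
  have hs : s ∈ Icc (M ^ 2 / 16) (M ^ 2) := by
    have := sq_add_sq_mem_Icc ha (norm_nonneg z) (norm_nonneg y)
      (by linarith [abs_le.1 hyz])
    rwa [show a + ‖z‖ + ‖y‖ = M by ring] at this
  have ht : t ∈ Icc (M ^ 2 / 16) (M ^ 2) :=
    sq_add_sq_mem_Icc ha (norm_nonneg y) (norm_nonneg z) (by linarith [abs_le.1 hyz])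
  have hst : |s - t| * ‖z‖ ≤ M ^ 2 * e := by
    have hdiff : s - t = (‖y‖ - ‖z‖) * (‖y‖ + ‖z‖) := by simp only [s, t]; ring
    have hy := norm_nonneg y
    have hz := norm_nonneg z
    calc |s - t| * ‖z‖ = |‖y‖ - ‖z‖| * (‖y‖ + ‖z‖) * ‖z‖ := by
          rw [hdiff, abs_mul, abs_of_nonneg (by positivity : 0 ≤ ‖y‖ + ‖z‖)]
      _ ≤ e * M * M := by
          gcongr
          · simp only [M]; linarith
          · simp only [M]; linarith
      _ = M ^ 2 * e := by ring
  calc ‖pLaplaceMap p a y - pLaplaceMap p a z‖ = ‖s ^ β • (y - z) + (s ^ β - t ^ β) • z‖ := by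
        show ‖s ^ β • y - t ^ β • z‖ = _
        congr 1; module
    _ ≤ s ^ β * e + |s ^ β - t ^ β| * ‖z‖ := by
        refine (norm_add_le _ _).trans_eq ?_
        rw [norm_smul, norm_smul, norm_of_nonneg (rpow_nonneg (by positivity) _), norm_eq_abs]
    _ ≤ 16 ^ |β| * (M ^ 2) ^ β * e + |β| * 16 ^ |β - 1| * (M ^ 2) ^ (β - 1) * (M ^ 2 * e) := by
        gcongr ?_ * e + ?_
        · exact rpow_le_rpow_mul_of_mem_Icc β (by norm_num) hu hs
        · calc |s ^ β - t ^ β| * ‖z‖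
              ≤ |β| * 16 ^ |β - 1| * (M ^ 2) ^ (β - 1) * |s - t| * ‖z‖ := by
                gcongr; exact abs_rpow_sub_rpow_le_of_mem_Icc β (by norm_num) hu hs ht
            _ ≤ |β| * 16 ^ |β - 1| * (M ^ 2) ^ (β - 1) * (M ^ 2 * e) := by
                rw [mul_assoc _ |s - t|]; gcongr
    _ = (16 ^ |β| + |β| * 16 ^ |β - 1|) * M ^ (p - 2) * e := by
        rw [rpow_sub_one hu.ne', sq_rpow_half hM.le]; field_simp

theorem norm_pLaplaceMap_sub_le {p a : ℝ} (hp : 1 ≤ p) (ha : 0 ≤ a) (y z : E) :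
    ‖pLaplaceMap p a y - pLaplaceMap p a z‖ ≤
      (8 + 16 ^ |(p - 2) / 2| + |(p - 2) / 2| * 16 ^ |(p - 2) / 2 - 1|) *
        (a + ‖y‖ + ‖z‖) ^ (p - 2) * ‖y - z‖ := by
  rcases eq_or_ne y z with rfl | hyz
  · simp
  have hM : 0 < a + ‖y‖ + ‖z‖ := by
    linarith [norm_sub_le y z, norm_pos_iff.2 (sub_ne_zero.2 hyz)]
  have hX : 0 ≤ (a + ‖y‖ + ‖z‖) ^ (p - 2) * ‖y - z‖ := by positivity
  have hA : 0 ≤ 16 ^ |(p - 2) / 2| * ((a + ‖y‖ + ‖z‖) ^ (p - 2) * ‖y - z‖) := by positivity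
  have hB : 0 ≤ |(p - 2) / 2| * 16 ^ |(p - 2) / 2 - 1| *
      ((a + ‖y‖ + ‖z‖) ^ (p - 2) * ‖y - z‖) := by positivity
  rcases le_total (a + ‖y‖ + ‖z‖) (4 * ‖y - z‖) with hfar | hnear
  · linarith [norm_pLaplaceMap_sub_le_of_far hp ha hM hfar]
  · linarith [norm_pLaplaceMap_sub_le_of_near p ha hM hnear]

end

/-- Lemma 2.1 (first inequality): for every `p ∈ (1,∞)` there is a positive constant `C₁`
depending only on `p` such that for all dimensions `d`, all `y z : ℝ^d` and all `a ≥ 0`,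
`|(a² + |y|²)^((p-2)/2) y − (a² + |z|²)^((p-2)/2) z| ≤ C₁ (a + |y| + |z|)^(p-2) |y − z|`. -/
theorem stmt_0 :
    ∀ p : ℝ, 1 < p →
      ∃ C₁ : ℝ, 0 < C₁ ∧
        ∀ (d : ℕ) (y z : EuclideanSpace ℝ (Fin d)) (a : ℝ), 0 ≤ a →
          ‖((a ^ 2 + ‖y‖ ^ 2) ^ ((p - 2) / 2)) • y -
              ((a ^ 2 + ‖z‖ ^ 2) ^ ((p - 2) / 2)) • z‖ ≤
            C₁ * (a + ‖y‖ + ‖z‖) ^ (p - 2) * ‖y - z‖ := by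
  intro p hp
  exact ⟨8 + 16 ^ |(p - 2) / 2| + |(p - 2) / 2| * 16 ^ |(p - 2) / 2 - 1|, by positivity,
    fun d y z a ha => norm_pLaplaceMap_sub_le hp.le ha y z⟩
end

section
/- For every p ∈ (1,∞) there exists a positive constant C₂ depending only on p such that for every dimension d ∈ ℕ, all vectors y, z ∈ ℝ^d and every real a ≥ 0, one has ((a² + |y|²)^{(p−2)/2} y − (a² + |z|²)^{(p−2)/2} z) · (y − z) ≥ C₂ (a + |y| + |z|)^{p−2} |y − z|², where · is the Euclidean inner product. -/
/-!
Write `s = ‖y‖`, `t = ‖z‖`, `φ(x) = (a² + x²)^((p-2)/2)` and `δ = s t - ⟪y, z⟫ ≥ 0`. Then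
`⟪φ(s) y - φ(t) z, y - z⟫ = (φ(s) s - φ(t) t)(s - t) + (φ(s) + φ(t)) δ` and
`‖y - z‖² = (s - t)² + 2δ`, so the vector inequality reduces to two scalar ones, with
`K = (a + s + t)^(p-2)`: the weights satisfy `φ(s) + φ(t) ≳ K`, because `a² + s²` and
`(a + s + t)²` are comparable, and the profile `x ↦ φ(x) x` grows at rate `≳ K`. For `p ≥ 2` the
latter follows from monotonicity of `φ`; for `p < 2` from the mean value theorem, since the
derivative `(a² + x²)^((p-4)/2) (a² + (p-1) x²)` is at least `(p-1) φ(x)`.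
-/

open scoped RealInnerProductSpace
open Real Set

theorem sq_rpow_div_two {x : ℝ} (hx : 0 ≤ x) (e : ℝ) : (x ^ 2) ^ (e / 2) = x ^ e := by
  rw [← rpow_natCast, ← rpow_mul hx]
  congr 1
  ring

theorem min_one_rpow_neg_mul_rpow_le {x y c q : ℝ} (hx : 0 ≤ x) (hxy : x ≤ y)
    (hyc : y ≤ c * x) : min 1 (c ^ (-q)) * y ^ q ≤ x ^ q := by
  rcases hx.eq_or_lt with rfl | hx
  · obtain rfl : y = 0 := by linarith
    exact mul_le_of_le_one_left (rpow_nonneg le_rfl q) (min_le_left _ _)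
  have hc : 0 < c := pos_of_mul_pos_left (hx.trans_le (hxy.trans hyc)) hx.le
  rcases le_total q 0 with hq | hq
  · calc min 1 (c ^ (-q)) * y ^ q ≤ 1 * y ^ q :=
          mul_le_mul_of_nonneg_right (min_le_left _ _) (rpow_nonneg (hx.le.trans hxy) q)
      _ ≤ x ^ q := by rw [one_mul]; exact rpow_le_rpow_of_nonpos hx hxy hq
  · calc min 1 (c ^ (-q)) * y ^ q ≤ c ^ (-q) * (c * x) ^ q :=
          mul_le_mul (min_le_right _ _) (rpow_le_rpow (hx.le.trans hxy) hyc hq)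
            (rpow_nonneg (hx.le.trans hxy) q) (rpow_nonneg hc.le _)
      _ = x ^ q := by
          rw [mul_rpow hc.le hx.le, ← mul_assoc, ← rpow_add hc, neg_add_cancel, rpow_zero, one_mul]

theorem hasDerivAt_rpow_sq_add_sq_mul_self (a q : ℝ) {x : ℝ} (hx : a ^ 2 + x ^ 2 ≠ 0) :
    HasDerivAt (fun x => (a ^ 2 + x ^ 2) ^ q * x)
      ((a ^ 2 + x ^ 2) ^ (q - 1) * (a ^ 2 + (2 * q + 1) * x ^ 2)) x := by
  have h : HasDerivAt (fun x => (a ^ 2 + x ^ 2) ^ q * x)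
      ((2 * x * q * (a ^ 2 + x ^ 2) ^ (q - 1)) * x + (a ^ 2 + x ^ 2) ^ q * 1) x := by
    simpa using (((hasDerivAt_pow 2 x).const_add (a ^ 2)).rpow_const (p := q) (Or.inl hx)).fun_mul
      (hasDerivAt_id' x)
  have hq : (a ^ 2 + x ^ 2) ^ q = (a ^ 2 + x ^ 2) ^ (q - 1) * (a ^ 2 + x ^ 2) := by
    rw [← rpow_add_one hx, sub_add_cancel]
  convert h using 1
  rw [hq]
  ring

section Profile

variable {p a s t : ℝ}

theorem min_one_mul_rpow_le_sq_add_sq_rpow (ha : 0 ≤ a) (ht : 0 ≤ t) (hts : t ≤ s) :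
    min 1 (8 ^ (-((p - 2) / 2))) * (a + s + t) ^ (p - 2) ≤ (a ^ 2 + s ^ 2) ^ ((p - 2) / 2) := by
  -- `a² + s² ≤ (a + s + t)² ≤ 4 (a + s)² ≤ 8 (a² + s²)`
  rw [← sq_rpow_div_two (by linarith : 0 ≤ a + s + t)]
  exact min_one_rpow_neg_mul_rpow_le (by positivity) (by nlinarith)
    (by nlinarith [sq_nonneg (a - s)])

theorem min_one_mul_rpow_le_add (ha : 0 ≤ a) (hs : 0 ≤ s) (ht : 0 ≤ t) :
    min 1 (8 ^ (-((p - 2) / 2))) * (a + s + t) ^ (p - 2) ≤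
      (a ^ 2 + s ^ 2) ^ ((p - 2) / 2) + (a ^ 2 + t ^ 2) ^ ((p - 2) / 2) := by
  rcases le_total t s with hts | hst
  · linarith [min_one_mul_rpow_le_sq_add_sq_rpow (p := p) ha ht hts,
      rpow_nonneg (by positivity : 0 ≤ a ^ 2 + t ^ 2) ((p - 2) / 2)]
  · rw [← add_right_comm]
    linarith [min_one_mul_rpow_le_sq_add_sq_rpow (p := p) ha hs hst,
      rpow_nonneg (by positivity : 0 ≤ a ^ 2 + s ^ 2) ((p - 2) / 2)]

theorem mul_rpow_mul_sub_le_of_lt_two (hp1 : 1 < p) (hp2 : p < 2) (ha : 0 ≤ a) (ht : 0 ≤ t)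
    (hts : t ≤ s) :
    (p - 1) * (a + s + t) ^ (p - 2) * (s - t) ≤
      (a ^ 2 + s ^ 2) ^ ((p - 2) / 2) * s - (a ^ 2 + t ^ 2) ^ ((p - 2) / 2) * t := by
  rcases (add_nonneg (sq_nonneg a) (sq_nonneg t)).eq_or_lt with h0 | hpos
  -- for `a = t = 0` the profile need not be differentiable at `t`, but both sides are explicit
  · obtain ⟨rfl, rfl⟩ : a = 0 ∧ t = 0 := by
      constructor <;> nlinarith [sq_nonneg a, sq_nonneg t]
    have hs : 0 ≤ s := ht.trans hts
    simp only [zero_add, add_zero, sub_zero, mul_zero, ne_eq, OfNat.ofNat_ne_zero,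
      not_false_eq_true, zero_pow, sq_rpow_div_two hs]
    exact mul_le_mul_of_nonneg_right (mul_le_of_le_one_left (rpow_nonneg hs _) (by linarith)) hs
  have hweight_pos : ∀ x ∈ Icc t s, 0 < a ^ 2 + x ^ 2 := fun x hx => by nlinarith [hx.1]
  have hderiv := fun x hx =>
    hasDerivAt_rpow_sq_add_sq_mul_self a ((p - 2) / 2) (hweight_pos x hx).ne'
  refine (convex_Icc t s).mul_sub_le_image_sub_of_le_deriv
    (f := fun x => (a ^ 2 + x ^ 2) ^ ((p - 2) / 2) * x)
    (fun x hx => (hderiv x hx).continuousAt.continuousWithinAt)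
    (fun x hx => (hderiv x (interior_subset hx)).differentiableAt.differentiableWithinAt)
    (fun x hx => ?_) t ⟨le_rfl, hts⟩ s ⟨hts, le_rfl⟩ hts
  have hx := interior_subset hx
  have hX := hweight_pos x hx
  rw [(hderiv x hx).deriv, show 2 * ((p - 2) / 2) + 1 = p - 1 by ring]
  calc (p - 1) * (a + s + t) ^ (p - 2)
      = (p - 1) * ((a + s + t) ^ 2) ^ ((p - 2) / 2) := by
        rw [sq_rpow_div_two (by linarith [hx.1, hx.2])]
    _ ≤ (p - 1) * (a ^ 2 + x ^ 2) ^ ((p - 2) / 2) := by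
        gcongr ?_ * ?_
        exact rpow_le_rpow_of_nonpos hX (by nlinarith [hx.1, hx.2]) (by linarith)
    _ = (a ^ 2 + x ^ 2) ^ ((p - 2) / 2 - 1) * ((p - 1) * (a ^ 2 + x ^ 2)) := by
        rw [mul_left_comm, ← rpow_add_one hX.ne', sub_add_cancel]
    _ ≤ (a ^ 2 + x ^ 2) ^ ((p - 2) / 2 - 1) * (a ^ 2 + (p - 1) * x ^ 2) := by
        gcongr
        nlinarith [sq_nonneg a]

theorem min_one_mul_rpow_mul_sub_le_of_two_le (hp : 2 ≤ p) (ha : 0 ≤ a) (ht : 0 ≤ t)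
    (hts : t ≤ s) :
    min 1 (8 ^ (-((p - 2) / 2))) * (a + s + t) ^ (p - 2) * (s - t) ≤
      (a ^ 2 + s ^ 2) ^ ((p - 2) / 2) * s - (a ^ 2 + t ^ 2) ^ ((p - 2) / 2) * t := by
  have hweight : (a ^ 2 + t ^ 2) ^ ((p - 2) / 2) ≤ (a ^ 2 + s ^ 2) ^ ((p - 2) / 2) :=
    rpow_le_rpow (by positivity) (by nlinarith) (by linarith)
  calc min 1 (8 ^ (-((p - 2) / 2))) * (a + s + t) ^ (p - 2) * (s - t)
      ≤ (a ^ 2 + s ^ 2) ^ ((p - 2) / 2) * (s - t) :=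
        mul_le_mul_of_nonneg_right (min_one_mul_rpow_le_sq_add_sq_rpow ha ht hts)
          (by linarith)
    _ ≤ _ := by nlinarith [mul_le_mul_of_nonneg_right hweight ht]

theorem min_mul_rpow_mul_sub_le_of_le (hp : 1 < p) (ha : 0 ≤ a) (ht : 0 ≤ t) (hts : t ≤ s) :
    min (p - 1) (min 1 ((8 : ℝ) ^ (-((p - 2) / 2)))) * (a + s + t) ^ (p - 2) * (s - t) ≤
      (a ^ 2 + s ^ 2) ^ ((p - 2) / 2) * s - (a ^ 2 + t ^ 2) ^ ((p - 2) / 2) * t := by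
  have hK : 0 ≤ (a + s + t) ^ (p - 2) := rpow_nonneg (by linarith) _
  have hst : 0 ≤ s - t := sub_nonneg.2 hts
  rcases lt_or_ge p 2 with hp2 | hp2
  · refine le_trans ?_ (mul_rpow_mul_sub_le_of_lt_two hp hp2 ha ht hts)
    exact mul_le_mul_of_nonneg_right (mul_le_mul_of_nonneg_right (min_le_left _ _) hK) hst
  · refine le_trans ?_ (min_one_mul_rpow_mul_sub_le_of_two_le hp2 ha ht hts)
    exact mul_le_mul_of_nonneg_right (mul_le_mul_of_nonneg_right (min_le_right _ _) hK) hst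

theorem min_mul_rpow_mul_sq_le_mul_sub (hp : 1 < p) (ha : 0 ≤ a) (hs : 0 ≤ s) (ht : 0 ≤ t) :
    min (p - 1) (min 1 ((8 : ℝ) ^ (-((p - 2) / 2)))) * (a + s + t) ^ (p - 2) * (s - t) ^ 2 ≤
      ((a ^ 2 + s ^ 2) ^ ((p - 2) / 2) * s - (a ^ 2 + t ^ 2) ^ ((p - 2) / 2) * t) * (s - t) := by
  rcases le_total t s with hts | hst
  · rw [sq, ← mul_assoc]
    exact mul_le_mul_of_nonneg_right (min_mul_rpow_mul_sub_le_of_le hp ha ht hts)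
      (sub_nonneg.2 hts)
  · have h := mul_le_mul_of_nonneg_right (min_mul_rpow_mul_sub_le_of_le hp ha hs hst)
      (sub_nonneg.2 hst)
    rw [add_right_comm] at h
    linarith

end Profile

theorem le_inner_smul_sub_smul {E : Type*} [NormedAddCommGroup E] [InnerProductSpace ℝ E]
    (y z : E) {α β c : ℝ} (hsum : 2 * c ≤ α + β)
    (hnorm : c * (‖y‖ - ‖z‖) ^ 2 ≤ (α * ‖y‖ - β * ‖z‖) * (‖y‖ - ‖z‖)) :
    c * ‖y - z‖ ^ 2 ≤ ⟪α • y - β • z, y - z⟫ := by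
  have hinner : ⟪α • y - β • z, y - z⟫ =
      (α * ‖y‖ - β * ‖z‖) * (‖y‖ - ‖z‖) + (α + β) * (‖y‖ * ‖z‖ - ⟪y, z⟫) := by
    simp only [inner_sub_left, inner_sub_right, real_inner_smul_left, real_inner_self_eq_norm_sq,
      real_inner_comm z y]
    ring
  have hdist : ‖y - z‖ ^ 2 = (‖y‖ - ‖z‖) ^ 2 + 2 * (‖y‖ * ‖z‖ - ⟪y, z⟫) := by
    rw [norm_sub_sq_real]
    ring
  rw [hinner, hdist]
  nlinarith [mul_le_mul_of_nonneg_right hsum (sub_nonneg.2 (real_inner_le_norm y z))]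

/-- Lemma 2.1 (second inequality): for every `p ∈ (1,∞)` there is a positive constant `C₂`
depending only on `p` such that for all dimensions `d`, all `y z : ℝ^d` and all `a ≥ 0`,
`((a² + |y|²)^((p-2)/2) y − (a² + |z|²)^((p-2)/2) z) · (y − z) ≥ C₂ (a + |y| + |z|)^(p-2) |y − z|²`. -/
theorem stmt_1 :
    ∀ p : ℝ, 1 < p →
      ∃ C₂ : ℝ, 0 < C₂ ∧
        ∀ (d : ℕ) (y z : EuclideanSpace ℝ (Fin d)) (a : ℝ), 0 ≤ a →
          C₂ * (a + ‖y‖ + ‖z‖) ^ (p - 2) * ‖y - z‖ ^ 2 ≤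
            ⟪((a ^ 2 + ‖y‖ ^ 2) ^ ((p - 2) / 2)) • y -
                ((a ^ 2 + ‖z‖ ^ 2) ^ ((p - 2) / 2)) • z, y - z⟫ := by
  intro p hp
  set c := min (p - 1) (min 1 ((8 : ℝ) ^ (-((p - 2) / 2))))
  have hc : 0 < c := lt_min (by linarith) (lt_min one_pos (by positivity))
  refine ⟨c / 2, half_pos hc, fun d y z a ha => ?_⟩
  apply le_inner_smul_sub_smul
  · calc 2 * (c / 2 * (a + ‖y‖ + ‖z‖) ^ (p - 2))
        ≤ min 1 (8 ^ (-((p - 2) / 2))) * (a + ‖y‖ + ‖z‖) ^ (p - 2) := by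
          rw [← mul_assoc, mul_div_cancel₀ _ two_ne_zero]
          gcongr
          exact min_le_right _ _
      _ ≤ _ := min_one_mul_rpow_le_add ha (norm_nonneg y) (norm_nonneg z)
  · refine le_trans ?_ (min_mul_rpow_mul_sq_le_mul_sub hp ha (norm_nonneg y) (norm_nonneg z))
    gcongr
    linarith
end

section
/- Let p ∈ [2,∞), ε > 0 and set μ_ε = max{1, 1/(4ε)}. Then for all real numbers α, β₁, β₂ ≥ 0 one has (α + β₁)^{p−2} β₁ β₂ ≤ μ_ε (α + β₁)^{p−2} β₁² + ε (α + β₂)^{p−2} β₂². -/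
/-- Generalized Young inequality: for `p ∈ [2,∞)`, `ε > 0`, `μ_ε = max{1, 1/(4ε)}`,
and all `α, β₁, β₂ ≥ 0`,
`(α + β₁)^(p−2) β₁ β₂ ≤ μ_ε (α + β₁)^(p−2) β₁² + ε (α + β₂)^(p−2) β₂²`. -/
theorem stmt_2 (p : ℝ) (hp : 2 ≤ p) (ε : ℝ) (hε : 0 < ε)
    (α β₁ β₂ : ℝ) (hα : 0 ≤ α) (hβ₁ : 0 ≤ β₁) (hβ₂ : 0 ≤ β₂) :
    (α + β₁) ^ (p - 2) * β₁ * β₂ ≤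
      max 1 (1 / (4 * ε)) * ((α + β₁) ^ (p - 2) * β₁ ^ 2) +
        ε * ((α + β₂) ^ (p - 2) * β₂ ^ 2) := by
  have hX : (0:ℝ) ≤ (α + β₁) ^ (p - 2) := Real.rpow_nonneg (by linarith) _
  have hY : (0:ℝ) ≤ (α + β₂) ^ (p - 2) := Real.rpow_nonneg (by linarith) _
  rcases le_total β₂ β₁ with h | h
  · have h1 : (α + β₁) ^ (p - 2) * β₁ * β₂ ≤ 1 * ((α + β₁) ^ (p - 2) * β₁ ^ 2) := by
      nlinarith [mul_nonneg hX hβ₁]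
    have h2 : (1:ℝ) ≤ max 1 (1 / (4 * ε)) := le_max_left _ _
    nlinarith [mul_nonneg hY (sq_nonneg β₂), mul_nonneg hX (sq_nonneg β₁)]
  · have hXY : (α + β₁) ^ (p - 2) ≤ (α + β₂) ^ (p - 2) :=
      Real.rpow_le_rpow (by linarith) (by linarith) (by linarith)
    have hyoung : β₁ * β₂ ≤ 1 / (4 * ε) * β₁ ^ 2 + ε * β₂ ^ 2 := by
      have h4 : (0:ℝ) < 4 * ε := by linarith
      rw [div_mul_eq_mul_div, one_mul, ← sub_nonneg]
      have key : β₁ ^ 2 / (4 * ε) + ε * β₂ ^ 2 - β₁ * β₂ =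
          (β₁ - 2 * ε * β₂) ^ 2 / (4 * ε) := by
        field_simp
        ring
      rw [key]
      positivity
    have h2 : 1 / (4 * ε) ≤ max 1 (1 / (4 * ε)) := le_max_right _ _
    have key : (α + β₁) ^ (p - 2) * β₁ * β₂ ≤
        1 / (4 * ε) * ((α + β₁) ^ (p - 2) * β₁ ^ 2) + ε * ((α + β₁) ^ (p - 2) * β₂ ^ 2) := by
      nlinarith [mul_le_mul_of_nonneg_left hyoung hX]
    have h3 : ε * ((α + β₁) ^ (p - 2) * β₂ ^ 2) ≤ ε * ((α + β₂) ^ (p - 2) * β₂ ^ 2) := by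
      apply mul_le_mul_of_nonneg_left _ hε.le
      exact mul_le_mul_of_nonneg_right hXY (sq_nonneg _)
    nlinarith [mul_nonneg hX (sq_nonneg β₁)]
end

section
/- Let p ∈ [2,∞), ε > 0, γ > 0 and set μ_ε = max{1, 1/(4ε)}. Then for all real numbers α, β₁, β₂ ≥ 0 one has (α + β₁)^{p−2} β₁ β₂ ≤ γ^{−1} μ_ε (α + β₁)^{p−2} β₁² + γ ε (α + γ β₂)^{p−2} β₂². -/
/-!
Write `A = (α + β₁)^(p-2)`, `B = (α + γβ₂)^(p-2)`; only the monotonicity and nonnegativity of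
`t ↦ t^(p-2)` on `[0, ∞)` matter. If `γβ₂ ≤ β₁`, then `β₁β₂ ≤ γ⁻¹β₁²` and the first term on the
right already dominates. If `β₁ < γβ₂`, then `A ≤ B`, and Young's inequality
`β₁β₂ ≤ (4εγ)⁻¹β₁² + εγβ₂²` gives the claim after multiplying by `A` and replacing `A` by `B`
in the second term.
-/

open Set

lemma mul_le_inv_mul_sq_of_mul_le {a b γ : ℝ} (ha : 0 ≤ a) (hγ : 0 < γ) (h : γ * b ≤ a) :
    a * b ≤ γ⁻¹ * a ^ 2 := by
  have hb : b ≤ γ⁻¹ * a := by rwa [le_inv_mul_iff₀ hγ]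
  calc a * b ≤ a * (γ⁻¹ * a) := mul_le_mul_of_nonneg_left hb ha
    _ = γ⁻¹ * a ^ 2 := by ring

lemma mul_le_inv_four_mul_sq_add_mul_sq {δ : ℝ} (hδ : 0 < δ) (a b : ℝ) :
    a * b ≤ (4 * δ)⁻¹ * a ^ 2 + δ * b ^ 2 := by
  have key : (4 * δ)⁻¹ * a ^ 2 + δ * b ^ 2 - a * b = (4 * δ)⁻¹ * (a - 2 * δ * b) ^ 2 := by
    field_simp
    ring
  have : 0 ≤ (4 * δ)⁻¹ * (a - 2 * δ * b) ^ 2 := by positivity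
  linarith

lemma mul_le_inv_max_mul_sq_add_mul_sq {ε γ a b : ℝ} (hε : 0 < ε) (hγ : 0 < γ) :
    a * b ≤ γ⁻¹ * max 1 (1 / (4 * ε)) * a ^ 2 + γ * ε * b ^ 2 := by
  have hcoef : (4 * (γ * ε))⁻¹ ≤ γ⁻¹ * max 1 (1 / (4 * ε)) := by
    calc (4 * (γ * ε))⁻¹ = γ⁻¹ * (1 / (4 * ε)) := by field_simp
      _ ≤ γ⁻¹ * max 1 (1 / (4 * ε)) := by gcongr; exact le_max_right _ _
  calc a * b ≤ (4 * (γ * ε))⁻¹ * a ^ 2 + γ * ε * b ^ 2 :=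
        mul_le_inv_four_mul_sq_add_mul_sq (mul_pos hγ hε) a b
    _ ≤ γ⁻¹ * max 1 (1 / (4 * ε)) * a ^ 2 + γ * ε * b ^ 2 := by gcongr

theorem mul_mul_le_of_monotoneOn {w : ℝ → ℝ} (hw : MonotoneOn w (Ici 0))
    (hw₀ : ∀ t, 0 ≤ t → 0 ≤ w t) {ε γ α β₁ β₂ : ℝ} (hε : 0 < ε) (hγ : 0 < γ)
    (hα : 0 ≤ α) (hβ₁ : 0 ≤ β₁) (hβ₂ : 0 ≤ β₂) :
    w (α + β₁) * β₁ * β₂ ≤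
      γ⁻¹ * max 1 (1 / (4 * ε)) * (w (α + β₁) * β₁ ^ 2) +
        γ * ε * (w (α + γ * β₂) * β₂ ^ 2) := by
  set A := w (α + β₁)
  set B := w (α + γ * β₂)
  have hA : 0 ≤ A := hw₀ _ (by positivity)
  have hB : 0 ≤ B := hw₀ _ (by positivity)
  rcases le_or_gt (γ * β₂) β₁ with h | h
  · have hsq : β₁ * β₂ ≤ γ⁻¹ * max 1 (1 / (4 * ε)) * β₁ ^ 2 :=
      calc β₁ * β₂ ≤ γ⁻¹ * β₁ ^ 2 := mul_le_inv_mul_sq_of_mul_le hβ₁ hγ h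
        _ ≤ γ⁻¹ * max 1 (1 / (4 * ε)) * β₁ ^ 2 := by
          rw [mul_assoc]; gcongr; exact le_mul_of_one_le_left (sq_nonneg _) (le_max_left _ _)
    have hrest : 0 ≤ γ * ε * (B * β₂ ^ 2) := by positivity
    linarith [mul_le_mul_of_nonneg_left hsq hA]
  · have hAB : A ≤ B := hw (by simp only [mem_Ici]; positivity)
      (by simp only [mem_Ici]; positivity) (by linarith)
    calc A * β₁ * β₂
        = A * (β₁ * β₂) := by ring
      _ ≤ A * (γ⁻¹ * max 1 (1 / (4 * ε)) * β₁ ^ 2 + γ * ε * β₂ ^ 2) :=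
        mul_le_mul_of_nonneg_left (mul_le_inv_max_mul_sq_add_mul_sq hε hγ) hA
      _ = γ⁻¹ * max 1 (1 / (4 * ε)) * (A * β₁ ^ 2) + γ * ε * (A * β₂ ^ 2) := by ring
      _ ≤ γ⁻¹ * max 1 (1 / (4 * ε)) * (A * β₁ ^ 2) + γ * ε * (B * β₂ ^ 2) := by gcongr

/-- Generalized Young inequality with an extra scaling parameter `γ`: for `p ∈ [2,∞)`,
`ε > 0`, `γ > 0`, `μ_ε = max{1, 1/(4ε)}`, and all `α, β₁, β₂ ≥ 0`,
`(α + β₁)^(p−2) β₁ β₂ ≤ γ⁻¹ μ_ε (α + β₁)^(p−2) β₁² + γ ε (α + γ β₂)^(p−2) β₂²`. -/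
theorem stmt_3 (p : ℝ) (hp : 2 ≤ p) (ε : ℝ) (hε : 0 < ε) (γ : ℝ) (hγ : 0 < γ)
    (α β₁ β₂ : ℝ) (hα : 0 ≤ α) (hβ₁ : 0 ≤ β₁) (hβ₂ : 0 ≤ β₂) :
    (α + β₁) ^ (p - 2) * β₁ * β₂ ≤
      γ⁻¹ * max 1 (1 / (4 * ε)) * ((α + β₁) ^ (p - 2) * β₁ ^ 2) +
        γ * ε * ((α + γ * β₂) ^ (p - 2) * β₂ ^ 2) :=
  mul_mul_le_of_monotoneOn (Real.monotoneOn_rpow_Ici_of_exponent_nonneg (by linarith))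
    (fun _ ht => Real.rpow_nonneg ht _) hε hγ hα hβ₁ hβ₂
end

section
/- For every p ∈ (1,∞), every dimension d ∈ ℕ, all vectors y, z ∈ ℝ^d and every real λ ≥ 0, one has (λ + |y + z|)^{p−2} |y + z|² ≤ max{2, 2^{p−1}} ((λ + |y|)^{p−2} |y|² + (λ + |z|)^{p−2} |z|²). -/
open Real

private lemma pow_mean_aux {x y p : ℝ} (hx : 0 ≤ x) (hy : 0 ≤ y) (hp : 1 ≤ p) :
    (x + y) ^ p ≤ 2 ^ (p - 1) * (x ^ p + y ^ p) := by
  have h := NNReal.rpow_add_le_mul_rpow_add_rpow x.toNNReal y.toNNReal hp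
  have h2 := (NNReal.coe_le_coe).2 h
  push_cast at h2
  rwa [Real.coe_toNNReal x hx, Real.coe_toNNReal y hy] at h2

private lemma mono_aux {p lam a b : ℝ} (hp : 1 < p) (hlam : 0 ≤ lam)
    (ha : 0 ≤ a) (hab : a ≤ b) :
    (lam + a) ^ (p - 2) * a ^ 2 ≤ (lam + b) ^ (p - 2) * b ^ 2 := by
  have hb : 0 ≤ b := ha.trans hab
  rcases ha.eq_or_lt with h0 | h0
  · rw [← h0]
    simpa using mul_nonneg (Real.rpow_nonneg (by linarith) (p - 2)) (sq_nonneg b)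
  · rcases le_or_gt 2 p with h2 | h2
    · exact mul_le_mul (Real.rpow_le_rpow (by linarith) (by linarith) (by linarith))
        (by nlinarith) (by positivity) (Real.rpow_nonneg (by linarith) _)
    · have hq0 : (0:ℝ) < 2 - p := by linarith
      have hla : 0 < lam + a := by linarith
      have hlb : 0 < lam + b := by linarith
      have hb0 : 0 < b := h0.trans_le hab
      rw [show p - 2 = -(2 - p) by ring, Real.rpow_neg hla.le, Real.rpow_neg hlb.le,
        inv_mul_eq_div, inv_mul_eq_div,
        div_le_div_iff₀ (Real.rpow_pos_of_pos hla _) (Real.rpow_pos_of_pos hlb _)]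
      have e1 : a ^ 2 * (lam + b) ^ (2 - p) = a ^ p * (a * (lam + b)) ^ (2 - p) := by
        rw [Real.mul_rpow h0.le hlb.le, ← mul_assoc, ← Real.rpow_add h0,
          show p + (2 - p) = (2:ℝ) by ring, Real.rpow_two]
      have e2 : b ^ 2 * (lam + a) ^ (2 - p) = b ^ p * (b * (lam + a)) ^ (2 - p) := by
        rw [Real.mul_rpow hb0.le hla.le, ← mul_assoc, ← Real.rpow_add hb0,
          show p + (2 - p) = (2:ℝ) by ring, Real.rpow_two]
      rw [e1, e2]
      have k1 : a ^ p ≤ b ^ p := Real.rpow_le_rpow h0.le hab (by linarith)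
      have k2 : (a * (lam + b)) ^ (2 - p) ≤ (b * (lam + a)) ^ (2 - p) :=
        Real.rpow_le_rpow (by positivity) (by nlinarith) hq0.le
      exact mul_le_mul k1 k2 (Real.rpow_nonneg (by positivity) _)
        (Real.rpow_nonneg hb0.le _)

private lemma step_aux {p lam a b : ℝ} (hp : 2 ≤ p) (hlam : 0 ≤ lam)
    (ha : 0 ≤ a) (hb : 0 ≤ b) :
    a * ((a + b) ^ (2/p) * (lam + (a + b)) ^ (1 - 2/p)) ≤
      (a + b) * (a ^ (2/p) * (lam + a) ^ (1 - 2/p)) := by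
  have hp0 : (0:ℝ) < p := by linarith
  have hθ0 : (0:ℝ) < 2/p := by positivity
  have hθ1 : 2/p ≤ 1 := by rw [div_le_one hp0]; linarith
  rcases ha.eq_or_lt with h0 | h0
  · rw [← h0]
    simp only [zero_mul, zero_add]
    positivity
  · have hab : 0 < a + b := by linarith
    have e1 : a * ((a + b) ^ (2/p) * (lam + (a + b)) ^ (1 - 2/p)) =
        (a * (a + b)) ^ (2/p) * (a * (lam + (a + b))) ^ (1 - 2/p) := by
      rw [Real.mul_rpow h0.le hab.le, Real.mul_rpow h0.le (by linarith)]
      rw [show a * ((a + b) ^ (2/p) * (lam + (a + b)) ^ (1 - 2/p)) =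
        (a ^ (2/p) * a ^ (1 - 2/p)) * ((a + b) ^ (2/p) * (lam + (a + b)) ^ (1 - 2/p)) from by
          rw [← Real.rpow_add h0, show 2/p + (1 - 2/p) = (1:ℝ) by ring, Real.rpow_one]]
      ring
    have e2 : (a + b) * (a ^ (2/p) * (lam + a) ^ (1 - 2/p)) =
        (a * (a + b)) ^ (2/p) * ((a + b) * (lam + a)) ^ (1 - 2/p) := by
      rw [Real.mul_rpow h0.le hab.le, Real.mul_rpow hab.le (by linarith)]
      rw [show (a + b) * (a ^ (2/p) * (lam + a) ^ (1 - 2/p)) =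
        ((a + b) ^ (2/p) * (a + b) ^ (1 - 2/p)) * (a ^ (2/p) * (lam + a) ^ (1 - 2/p)) from by
          rw [← Real.rpow_add hab, show 2/p + (1 - 2/p) = (1:ℝ) by ring, Real.rpow_one]]
      ring
    rw [e1, e2]
    refine mul_le_mul_of_nonneg_left ?_ (Real.rpow_nonneg (by positivity) _)
    exact Real.rpow_le_rpow (by positivity) (by nlinarith) (by linarith)

private lemma phi_pow {p lam t : ℝ} (hp : 2 ≤ p) (hlam : 0 ≤ lam) (ht : 0 ≤ t) :
    (t ^ (2/p) * (lam + t) ^ (1 - 2/p)) ^ p = (lam + t) ^ (p - 2) * t ^ 2 := by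
  have hp0 : (0:ℝ) < p := by linarith
  rw [Real.mul_rpow (Real.rpow_nonneg ht _) (Real.rpow_nonneg (by linarith) _),
    ← Real.rpow_mul ht, ← Real.rpow_mul (by linarith : (0:ℝ) ≤ lam + t),
    show 2/p * p = (2:ℝ) by field_simp, show (1 - 2/p) * p = p - 2 by field_simp,
    Real.rpow_two]
  ring

private lemma key_aux {p lam a b : ℝ} (hp : 1 < p) (hlam : 0 ≤ lam)
    (ha : 0 ≤ a) (hb : 0 ≤ b) :
    (lam + (a + b)) ^ (p - 2) * (a + b) ^ 2 ≤
      max 2 (2 ^ (p - 1)) *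
        ((lam + a) ^ (p - 2) * a ^ 2 + (lam + b) ^ (p - 2) * b ^ 2) := by
  have hsum_nonneg : 0 ≤ (lam + a) ^ (p - 2) * a ^ 2 + (lam + b) ^ (p - 2) * b ^ 2 :=
    add_nonneg (mul_nonneg (Real.rpow_nonneg (by linarith) _) (sq_nonneg a))
      (mul_nonneg (Real.rpow_nonneg (by linarith) _) (sq_nonneg b))
  rcases le_or_gt 2 p with h2 | h2
  · -- p ≥ 2 : use subadditivity of φ(t) = t^(2/p) (lam+t)^(1-2/p) and power mean
    set θ := 2/p with hθ
    set φa := a ^ θ * (lam + a) ^ (1 - θ) with hφa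
    set φb := b ^ θ * (lam + b) ^ (1 - θ) with hφb
    set φs := (a + b) ^ θ * (lam + (a + b)) ^ (1 - θ) with hφs
    have hφa0 : 0 ≤ φa := mul_nonneg (Real.rpow_nonneg ha _) (Real.rpow_nonneg (by linarith) _)
    have hφb0 : 0 ≤ φb := mul_nonneg (Real.rpow_nonneg hb _) (Real.rpow_nonneg (by linarith) _)
    have hφs0 : 0 ≤ φs := mul_nonneg (Real.rpow_nonneg (by linarith) _)
      (Real.rpow_nonneg (by linarith) _)
    have hsub : φs ≤ φa + φb := by
      rcases eq_or_lt_of_le (by linarith : (0:ℝ) ≤ a + b) with hab0 | hab0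
      · have ha0 : a = 0 := by linarith
        have hb0 : b = 0 := by linarith
        have : φs = φb := by rw [hφs, hφb, ha0, hb0]; norm_num
        rw [this]; linarith
      · have h1 := step_aux h2 hlam ha hb
        have h2' := step_aux h2 hlam hb ha
        rw [show b + a = a + b by ring] at h2'
        have hcomb : (a + b) * φs ≤ (a + b) * (φa + φb) := by
          rw [hφs, hφa, hφb]; nlinarith [h1, h2']
        exact le_of_mul_le_mul_left hcomb hab0
    calc (lam + (a + b)) ^ (p - 2) * (a + b) ^ 2 = φs ^ p := by
          rw [phi_pow h2 hlam (by linarith)]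
      _ ≤ (φa + φb) ^ p := Real.rpow_le_rpow hφs0 hsub (by linarith)
      _ ≤ 2 ^ (p - 1) * (φa ^ p + φb ^ p) := pow_mean_aux hφa0 hφb0 (by linarith)
      _ = 2 ^ (p - 1) * ((lam + a) ^ (p - 2) * a ^ 2 + (lam + b) ^ (p - 2) * b ^ 2) := by
          rw [hφa, hφb, phi_pow h2 hlam ha, phi_pow h2 hlam hb]
      _ ≤ max 2 (2 ^ (p - 1)) *
            ((lam + a) ^ (p - 2) * a ^ 2 + (lam + b) ^ (p - 2) * b ^ 2) :=
          mul_le_mul_of_nonneg_right (le_max_right _ _) hsum_nonneg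
  · -- 1 < p < 2
    have hneg : p - 2 ≤ 0 := by linarith
    have hA : a ^ 2 * (lam + (a + b)) ^ (p - 2) ≤ a ^ 2 * (lam + a) ^ (p - 2) := by
      rcases ha.eq_or_lt with h0 | h0
      · rw [← h0]; norm_num
      · exact mul_le_mul_of_nonneg_left
          (Real.rpow_le_rpow_of_nonpos (by linarith) (by linarith) hneg) (sq_nonneg a)
    have hB : b ^ 2 * (lam + (a + b)) ^ (p - 2) ≤ b ^ 2 * (lam + b) ^ (p - 2) := by
      rcases hb.eq_or_lt with h0 | h0
      · rw [← h0]; norm_num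
      · exact mul_le_mul_of_nonneg_left
          (Real.rpow_le_rpow_of_nonpos (by linarith) (by linarith) hneg) (sq_nonneg b)
    have hsq : (a + b) ^ 2 ≤ 2 * a ^ 2 + 2 * b ^ 2 := by nlinarith [sq_nonneg (a - b)]
    have hrp : 0 ≤ (lam + (a + b)) ^ (p - 2) := Real.rpow_nonneg (by linarith) _
    have step1 : (lam + (a + b)) ^ (p - 2) * (a + b) ^ 2 ≤
        2 * ((lam + a) ^ (p - 2) * a ^ 2 + (lam + b) ^ (p - 2) * b ^ 2) := by
      calc (lam + (a + b)) ^ (p - 2) * (a + b) ^ 2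
          ≤ (lam + (a + b)) ^ (p - 2) * (2 * a ^ 2 + 2 * b ^ 2) :=
            mul_le_mul_of_nonneg_left hsq hrp
        _ = 2 * (a ^ 2 * (lam + (a + b)) ^ (p - 2)) +
            2 * (b ^ 2 * (lam + (a + b)) ^ (p - 2)) := by ring
        _ ≤ 2 * (a ^ 2 * (lam + a) ^ (p - 2)) + 2 * (b ^ 2 * (lam + b) ^ (p - 2)) := by
            linarith
        _ = 2 * ((lam + a) ^ (p - 2) * a ^ 2 + (lam + b) ^ (p - 2) * b ^ 2) := by ring
    exact step1.trans (mul_le_mul_of_nonneg_right (le_max_left _ _) hsum_nonneg)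

/-- Lemma 2.4: for `p ∈ (1,∞)`, all `y z : ℝ^d` and `λ ≥ 0`,
`(λ + |y + z|)^(p−2) |y + z|² ≤ max{2, 2^(p−1)} ((λ + |y|)^(p−2) |y|² + (λ + |z|)^(p−2) |z|²)`. -/
theorem stmt_4 (p : ℝ) (hp : 1 < p) (d : ℕ) (y z : EuclideanSpace ℝ (Fin d))
    (lam : ℝ) (hlam : 0 ≤ lam) :
    (lam + ‖y + z‖) ^ (p - 2) * ‖y + z‖ ^ 2 ≤
      max 2 (2 ^ (p - 1)) *
        ((lam + ‖y‖) ^ (p - 2) * ‖y‖ ^ 2 + (lam + ‖z‖) ^ (p - 2) * ‖z‖ ^ 2) := by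
  have h1 : (lam + ‖y + z‖) ^ (p - 2) * ‖y + z‖ ^ 2 ≤
      (lam + (‖y‖ + ‖z‖)) ^ (p - 2) * (‖y‖ + ‖z‖) ^ 2 :=
    mono_aux hp hlam (norm_nonneg _) (norm_add_le y z)
  exact h1.trans (key_aux hp hlam (norm_nonneg y) (norm_nonneg z))
end

section
/- For every r ∈ ℕ and every real polynomial v in one variable of degree at most r, there exist real numbers a, b with 0 ≤ a ≤ b ≤ 1 and b − a ≥ 1/(2(1 + 2r²)) such that |v(x)| ≥ (1/2) · sup_{t ∈ [0,1]} |v(t)| for every x ∈ [a, b]. -/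
/-!
Substituting `x = (1 - cos θ) / 2` turns `v` into a trigonometric polynomial `f` of degree `r`
with `|f| ≤ M` and `f θ₀ = M` at some `θ₀ ∈ [0, π/2]` (after replacing `v` by `±v(x)` or
`±v(1 - x)`). A comparison argument gives `f (θ₀ + s) ≥ M cos (r s)` for `0 ≤ s ≤ π / r`:
otherwise a small perturbation of `M cos (r (θ - θ₀)) - f θ` would have a double zero at `θ₀`
and `2r - 1` further zeros in one period, one more than a nonzero trigonometric polynomial of
degree `r` can have. Hence `f ≥ M / 2` on `[θ₀, θ₀ + π / (3r)]`, whose image in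
`[0, 1]` has length at least `sin (π / (6r)) ^ 2 ≥ 1 / (2 (1 + 2r²))`.
-/

open Polynomial Real Set
open scoped Complex

theorem exists_finset_zeros_of_sign_changes {g : ℝ → ℝ} (hg : Continuous g) {p : ℕ → ℝ}
    (hp : Monotone p) {n : ℕ} (hsign : ∀ k < n, g (p k) * g (p (k + 1)) < 0) :
    ∃ Z : Finset ℝ, Z.card = n ∧ ↑Z ⊆ Ioo (p 0) (p n) ∧ ∀ x ∈ Z, g x = 0 := by
  induction n with
  | zero => exact ⟨∅, rfl, by simp, by simp⟩
  | succ n ih =>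
    obtain ⟨Z, hcard, hZ, hZg⟩ := ih fun k hk => hsign k (by omega)
    have hle : p n ≤ p (n + 1) := hp n.le_succ
    obtain ⟨z, hz, hgz⟩ : ∃ z ∈ Ioo (p n) (p (n + 1)), g z = 0 := by
      rcases mul_neg_iff.1 (hsign n n.lt_succ_self) with ⟨h1, h2⟩ | ⟨h1, h2⟩
      · exact intermediate_value_Ioo' hle hg.continuousOn ⟨h2, h1⟩
      · exact intermediate_value_Ioo hle hg.continuousOn ⟨h1, h2⟩
    have hp0 : p 0 ≤ p n := hp n.zero_le
    have hzZ : z ∉ Z := fun h => (hZ h).2.not_gt hz.1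
    refine ⟨insert z Z, by rw [Finset.card_insert_of_notMem hzZ, hcard], ?_, ?_⟩
    · rw [Finset.coe_insert, insert_subset_iff]
      exact ⟨⟨hp0.trans_lt hz.1, hz.2⟩, hZ.trans (Ioo_subset_Ioo_right hle)⟩
    · simpa [hgz] using hZg

lemma cos_lt_one_of_pos_of_lt_two_pi {x : ℝ} (hx0 : 0 < x) (hx : x < 2 * π) : cos x < 1 :=
  (cos_le_one x).lt_of_ne fun h =>
    hx0.ne' ((cos_eq_one_iff_of_lt_of_lt (by linarith [pi_pos]) hx).1 h)

/-- Real trigonometric polynomials of degree at most `r`, encoded by a complex polynomial `Q` of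
degree at most `2r` with `Q (e^{iθ}) = e^{irθ} f θ`. -/
def trigPoly (r : ℕ) : Submodule ℝ (ℝ → ℝ) where
  carrier := {f | ∃ Q : ℂ[X], Q.natDegree ≤ 2 * r ∧
    ∀ θ : ℝ, Q.eval (cexp (θ * Complex.I)) = cexp (θ * Complex.I) ^ r * f θ}
  add_mem' := by
    rintro f g ⟨P, hP, hPf⟩ ⟨Q, hQ, hQg⟩
    exact ⟨P + Q, (natDegree_add_le _ _).trans (max_le hP hQ), fun θ => by
      simp only [eval_add, hPf, hQg, Pi.add_apply, Complex.ofReal_add]; ring⟩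
  zero_mem' := ⟨0, by simp, fun θ => by simp⟩
  smul_mem' := by
    rintro c f ⟨Q, hQ, hQf⟩
    exact ⟨C (c : ℂ) * Q, (natDegree_C_mul_le _ _).trans hQ, fun θ => by
      simp only [eval_mul, eval_C, hQf, Pi.smul_apply, smul_eq_mul, Complex.ofReal_mul]; ring⟩

namespace trigPoly

variable {r s : ℕ} {f g : ℝ → ℝ}

lemma mono (h : r ≤ s) : trigPoly r ≤ trigPoly s := by
  rintro f ⟨Q, hQ, hQf⟩
  refine ⟨X ^ (s - r) * Q, natDegree_mul_le.trans ?_, fun θ => ?_⟩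
  · rw [natDegree_X_pow]; omega
  · rw [eval_mul, hQf, eval_pow, eval_X, ← mul_assoc, ← pow_add, Nat.sub_add_cancel h]

lemma mul_mem (hf : f ∈ trigPoly r) (hg : g ∈ trigPoly s) : f * g ∈ trigPoly (r + s) := by
  obtain ⟨P, hP, hPf⟩ := hf
  obtain ⟨Q, hQ, hQg⟩ := hg
  refine ⟨P * Q, natDegree_mul_le.trans (by omega), fun θ => ?_⟩
  simp only [eval_mul, hPf, hQg, Pi.mul_apply, Complex.ofReal_mul]
  ring

lemma cos_mul_sub_mem {k : ℕ} (hk : k ≤ r) (φ : ℝ) :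
    (fun θ => cos (k * (θ - φ))) ∈ trigPoly r := by
  obtain ⟨m, rfl⟩ := Nat.exists_eq_add_of_le hk
  refine ⟨C (cexp (-(k * φ) * Complex.I) / 2) * X ^ (m + 2 * k) +
    C (cexp (k * φ * Complex.I) / 2) * X ^ m, ?_, fun θ => ?_⟩
  · compute_degree; omega
  · simp only [eval_add, eval_mul, eval_C, eval_pow, eval_X, ← Complex.exp_nat_mul,
      Complex.ofReal_cos, Complex.cos]
    push_cast
    simp only [mul_add, add_mul, div_mul_eq_mul_div, mul_div_assoc', ← Complex.exp_add]
    ring_nf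

lemma pow_cos_mem (k : ℕ) : (fun θ => cos θ ^ k) ∈ trigPoly k := by
  induction k with
  | zero => simpa using cos_mul_sub_mem (r := 0) le_rfl 0
  | succ k ih =>
    have h1 : (fun θ => cos θ) ∈ trigPoly 1 := by simpa using cos_mul_sub_mem (r := 1) le_rfl 0
    convert mul_mem ih h1 using 1
    ext θ
    simp [pow_succ]

lemma eval_cos_mem {P : ℝ[X]} (hP : P.natDegree ≤ r) : (fun θ => P.eval (cos θ)) ∈ trigPoly r := by
  have : (fun θ => P.eval (cos θ)) =
      ∑ k ∈ Finset.range (r + 1), P.coeff k • fun θ => cos θ ^ k := by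
    ext θ
    simp [eval_eq_sum_range' (Nat.lt_succ_of_le hP)]
  rw [this]
  exact Submodule.sum_mem _ fun k hk =>
    Submodule.smul_mem _ _ (mono (Nat.lt_succ_iff.1 (Finset.mem_range.1 hk)) (pow_cos_mem k))

lemma differentiable_of_mem (hf : f ∈ trigPoly r) : Differentiable ℝ f := by
  obtain ⟨Q, -, hQf⟩ := hf
  have : f = fun θ : ℝ => (cexp (-(r * θ) * Complex.I) * Q.eval (cexp (θ * Complex.I))).re := by
    ext θ
    rw [hQf, ← Complex.exp_nat_mul, ← mul_assoc, ← Complex.exp_add]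
    ring_nf
    simp
  rw [this]
  fun_prop

lemma hasDerivAt_zero_of_forall_le (hf : f ∈ trigPoly r) {θ₀ : ℝ} (h : ∀ θ, f θ ≤ f θ₀) :
    HasDerivAt f 0 θ₀ := by
  have hd := (differentiable_of_mem hf θ₀).hasDerivAt
  rwa [IsLocalMax.deriv_eq_zero (Filter.Eventually.of_forall h)] at hd

theorem card_zeros_add_two_le (hf : f ∈ trigPoly r) (hf0 : ∃ θ, f θ ≠ 0) {θ₀ : ℝ} (h0 : f θ₀ = 0)
    (h0' : HasDerivAt f 0 θ₀) {Z : Finset ℝ} (hZ : ↑Z ⊆ Ioo θ₀ (θ₀ + 2 * π))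
    (hZf : ∀ θ ∈ Z, f θ = 0) : Z.card + 2 ≤ 2 * r := by
  obtain ⟨Q, hQ, hQf⟩ := hf
  set e : ℝ → ℂ := fun θ => cexp (θ * Complex.I) with he
  have hQ0 : Q ≠ 0 := by
    rintro rfl
    obtain ⟨θ, hθ⟩ := hf0
    exact hθ (by simpa [Complex.exp_ne_zero] using (hQf θ).symm)
  have hroot : Q.IsRoot (e θ₀) := by simp [he, hQf, h0]
  have hroot' : (derivative Q).IsRoot (e θ₀) := by
    have hde : HasDerivAt e (e θ₀ * (1 * Complex.I)) θ₀ :=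
      ((hasDerivAt_id θ₀).ofReal_comp.mul_const Complex.I).cexp
    have h1 := (Q.hasDerivAt (e θ₀)).comp θ₀ hde
    have h2 : HasDerivAt (fun θ => e θ ^ r * (f θ : ℂ)) 0 θ₀ := by
      simpa [h0] using ((hde.fun_pow r).fun_mul h0'.ofReal_comp)
    have := h1.unique (by simpa only [Function.comp_def, he, hQf] using h2)
    simpa [he, Complex.exp_ne_zero] using this
  obtain ⟨R, hR⟩ : (X - C (e θ₀)) ^ 2 ∣ Q := (le_rootMultiplicity_iff hQ0).1
    ((one_lt_rootMultiplicity_iff_isRoot hQ0).2 ⟨hroot, hroot'⟩)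
  have hR0 : R ≠ 0 := by rintro rfl; exact hQ0 (by simpa using hR)
  have hdeg : Q.natDegree = 2 + R.natDegree := by
    rw [hR, natDegree_mul (pow_ne_zero _ (X_sub_C_ne_zero _)) hR0, natDegree_pow,
      natDegree_X_sub_C, mul_one]
  have hinj : InjOn e (Ico θ₀ (θ₀ + 2 * π)) :=
    Subtype.val_injective.comp_injOn (Circle.exp_injOn_Ico (by linarith))
  have hZR : (Z.image e).val ⊆ R.roots := by
    intro z hz
    obtain ⟨θ, hθ, rfl⟩ := Finset.mem_image.1 hz
    have hne : e θ - e θ₀ ≠ 0 := sub_ne_zero.2 fun h =>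
      (hZ hθ).1.ne' (hinj (Ioo_subset_Ico_self (hZ hθ)) (left_mem_Ico.2 (by linarith [pi_pos])) h)
    have : Q.eval (e θ) = 0 := by simp [he, hQf, hZf θ hθ]
    rw [hR, eval_mul] at this
    simpa [mem_roots hR0, hne] using this
  have := card_le_degree_of_subset_roots hZR
  rw [Finset.card_image_of_injOn (hinj.mono (hZ.trans Ioo_subset_Ico_self))] at this
  omega

end trigPoly

theorem trigPoly.apply_add_le_zero_of_alternating {r : ℕ} (hr : 1 ≤ r) {g : ℝ → ℝ}
    (hg : g ∈ trigPoly r) {θ₀ : ℝ} (h0 : g θ₀ = 0) (h0' : HasDerivAt g 0 θ₀) {s : ℝ}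
    (hs0 : 0 < s) (hs : s ≤ π / r)
    (halt : ∀ k, 1 ≤ k → k < 2 * r → 0 < (-1) ^ k * g (θ₀ + k * π / r)) :
    g (θ₀ + s) ≤ 0 := by
  have hr' : (0 : ℝ) < r := by positivity
  by_contra! hgs
  -- `g` changes sign between consecutive points of `θ₀ + s, θ₀ + π / r, …, θ₀ + (2r - 1) π / r`.
  let t : ℕ → ℝ := fun k => if k = 0 then θ₀ + s else θ₀ + k * π / r
  have ht : Monotone t := by
    refine monotone_nat_of_le_succ fun k => ?_
    rcases k.eq_zero_or_pos with rfl | hk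
    · simpa [t] using hs
    · simp only [t, hk.ne', if_false, Nat.succ_ne_zero, Nat.cast_succ]
      gcongr
      linarith
  have hsign : ∀ k < 2 * r - 1, g (t k) * g (t (k + 1)) < 0 := by
    intro k hk
    have h1 := halt (k + 1) (by omega) (by omega)
    rcases k.eq_zero_or_pos with rfl | hk0
    · simp only [t, if_true, zero_add, one_ne_zero, if_false, pow_one] at h1 ⊢
      nlinarith
    · have h0 := halt k hk0 (by omega)
      simp only [t, hk0.ne', Nat.succ_ne_zero, if_false]
      rw [pow_succ] at h1
      nlinarith [mul_pos h0 h1, (by rw [← mul_pow]; norm_num : ((-1 : ℝ) ^ k) * (-1) ^ k = 1)]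
  obtain ⟨Z, hZcard, hZ, hZg⟩ :=
    exists_finset_zeros_of_sign_changes (trigPoly.differentiable_of_mem hg).continuous ht hsign
  have hZ' : ↑Z ⊆ Ioo θ₀ (θ₀ + 2 * π) := by
    refine hZ.trans (Ioo_subset_Ioo (by simp [t, hs0.le]) ?_)
    simp only [t, show 2 * r - 1 ≠ 0 by omega, if_false]
    rw [Nat.cast_sub (by omega), add_le_add_iff_left, div_le_iff₀ hr']
    push_cast
    nlinarith [pi_pos]
  have := trigPoly.card_zeros_add_two_le hg ⟨θ₀ + s, hgs.ne'⟩ h0 h0' hZ' hZg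
  omega

open trigPoly in
theorem mul_cos_le_of_mem_trigPoly {r : ℕ} {f : ℝ → ℝ} (hf : f ∈ trigPoly r) {θ₀ : ℝ}
    (hmax : ∀ θ, |f θ| ≤ f θ₀) {s : ℝ} (hs0 : 0 ≤ s) (hs : s ≤ π / r) :
    f θ₀ * cos (r * s) ≤ f (θ₀ + s) := by
  rcases hs0.eq_or_lt with rfl | hs0
  · simp
  have hr : 1 ≤ r := by
    by_contra! h
    simp [Nat.lt_one_iff.1 h] at hs
    linarith
  have hr' : (0 : ℝ) < r := by positivity
  by_contra! hlt
  set M := f θ₀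
  set ε := (M * cos (r * s) - f (θ₀ + s)) / 4 with hε_def
  have hε : 0 < ε := by linarith
  -- Compared with `M cos (r (θ - θ₀)) - f θ`, the `ε`-terms keep the double zero at `θ₀` but make
  -- `g` alternate strictly in sign at the nodes `θ₀ + k π / r`, `0 < k < 2r`.
  let c : ℕ → ℝ → ℝ := fun k θ => cos (k * (θ - θ₀))
  let g : ℝ → ℝ := (M + ε) • c r - f - (ε / 2) • (c 0 + c 1)
  have hg_apply (θ : ℝ) :
      g θ = (M + ε) * cos (r * (θ - θ₀)) - f θ - ε / 2 * (1 + cos (θ - θ₀)) := by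
    simp [g, c]; ring
  have hc : ∀ k, c k ∈ trigPoly k := fun k => cos_mul_sub_mem le_rfl θ₀
  have hg : g ∈ trigPoly r := sub_mem (sub_mem (Submodule.smul_mem _ _ (hc r)) hf)
    (Submodule.smul_mem _ _ (add_mem (mono r.zero_le (hc 0)) (mono (by omega) (hc 1))))
  have hg_deriv : HasDerivAt g 0 θ₀ := by
    have hc' (k : ℕ) : HasDerivAt (c k) 0 θ₀ :=
      hasDerivAt_zero_of_forall_le (hc k) fun θ => by simpa [c] using cos_le_one _
    have hf' : HasDerivAt f 0 θ₀ :=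
      hasDerivAt_zero_of_forall_le hf fun θ => (le_abs_self _).trans (hmax θ)
    simpa only [smul_zero, sub_zero, add_zero] using
      (((hc' r).const_smul (M + ε)).sub hf').sub (((hc' 0).add (hc' 1)).const_smul (ε / 2))
  have hg_node : ∀ k, 1 ≤ k → k < 2 * r → 0 < (-1) ^ k * g (θ₀ + k * π / r) := by
    intro k hk1 hk2
    have hcos : cos (k * π / r) < 1 := cos_lt_one_of_pos_of_lt_two_pi (by positivity) <| by
      rw [div_lt_iff₀ hr']
      nlinarith [mul_lt_mul_of_pos_right (by exact_mod_cast hk2 : (k : ℝ) < 2 * r) pi_pos]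
    have hk : (r : ℝ) * (θ₀ + k * π / r - θ₀) = k * π := by field_simp; ring
    rw [hg_apply, hk, cos_nat_mul_pi, add_sub_cancel_left]
    have hfk := abs_le.1 (hmax (θ₀ + k * π / r))
    rcases Nat.even_or_odd k with he | ho
    · simp only [he.neg_one_pow]; nlinarith [neg_one_le_cos (k * π / r)]
    · simp only [ho.neg_one_pow]; nlinarith [neg_one_le_cos (k * π / r)]
  have hg_s := apply_add_le_zero_of_alternating hr hg (by rw [hg_apply]; simp; ring) hg_deriv hs0 hs
    hg_node
  rw [hg_apply, add_sub_cancel_left] at hg_s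
  nlinarith [neg_one_le_cos (r * s), cos_le_one s]

lemma one_div_le_sin_pi_div_sq {u : ℝ} (hu : 1 ≤ u) :
    1 / (2 * (1 + 2 * u ^ 2)) ≤ sin (π / (6 * u)) ^ 2 := by
  set t := π / (6 * u) with ht
  have htu : t * u = π / 6 := by rw [ht]; field_simp
  have ht0 : 0 < t := by positivity
  have ht1 : t ≤ 1 := by
    rw [ht, div_le_one (by positivity)]; linarith [pi_lt_four]
  have hsin : t - t ^ 3 / 6 ≤ sin t := sin_ge_sub_cube ht0.le
  have hpos : 0 < t - t ^ 3 / 6 := by nlinarith [mul_le_mul_of_nonneg_left ht1 ht0.le]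
  have hsq : t ^ 2 - t ^ 4 / 3 ≤ sin t ^ 2 :=
    calc t ^ 2 - t ^ 4 / 3 ≤ (t - t ^ 3 / 6) ^ 2 := by nlinarith [pow_nonneg ht0.le 6]
      _ ≤ sin t ^ 2 := pow_le_pow_left₀ hpos.le hsin 2
  have hπ : 1 ≤ (t * u) ^ 2 * 4 := by rw [htu]; nlinarith [pi_gt_three]
  have hπ' : (t * u) ^ 2 ≤ 1 / 2 := by rw [htu]; nlinarith [pi_lt_four, pi_pos]
  rw [div_le_iff₀ (by positivity)]
  nlinarith [mul_nonneg (mul_nonneg ht0.le ht0.le) (sub_nonneg.2 ht1)]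

lemma sin_half_sq_le_cos_sub_cos {θ h : ℝ} (hθ : 0 ≤ θ) (hh : 0 ≤ h) (hθh : θ + h ≤ π) :
    sin (h / 2) ^ 2 ≤ (cos θ - cos (θ + h)) / 2 := by
  have h1 : (cos θ - cos (θ + h)) / 2 = sin (θ + h / 2) * sin (h / 2) := by
    rw [cos_sub_cos, show (θ - (θ + h)) / 2 = -(h / 2) by ring, sin_neg]; ring_nf
  have h2 : sin (θ + h / 2) - sin (h / 2) = 2 * sin (θ / 2) * cos ((θ + h) / 2) := by
    rw [sin_sub_sin]; ring_nf
  have h3 : 0 ≤ sin (θ / 2) := sin_nonneg_of_nonneg_of_le_pi (by linarith) (by linarith)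
  have h4 : 0 ≤ cos ((θ + h) / 2) := cos_nonneg_of_mem_Icc ⟨by linarith [pi_pos], by linarith⟩
  have h5 : 0 ≤ sin (h / 2) := sin_nonneg_of_nonneg_of_le_pi (by linarith) (by linarith)
  rw [h1]
  nlinarith [mul_nonneg h3 h4]

open trigPoly in
theorem le_two_mul_eval_of_forall_abs_eval_le {r : ℕ} (hr : 1 ≤ r) {v : ℝ[X]}
    (hv : v.natDegree ≤ r) {x₀ : ℝ} (hx₀ : x₀ ∈ Icc (0 : ℝ) (1 / 2))
    (hmax : ∀ x ∈ Icc (0 : ℝ) 1, |v.eval x| ≤ v.eval x₀) {x : ℝ}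
    (hx : x ∈ Icc x₀ (x₀ + 1 / (2 * (1 + 2 * (r : ℝ) ^ 2)))) :
    v.eval x₀ ≤ 2 * v.eval x := by
  have hr' : (1 : ℝ) ≤ r := by exact_mod_cast hr
  set P := v.comp (C (1 / 2) * (1 - X))
  have hP : ∀ θ, P.eval (cos θ) = v.eval ((1 - cos θ) / 2) := fun θ => by
    simp only [P, eval_comp, eval_mul, eval_C, eval_sub, eval_one, eval_X]; ring_nf
  have hPdeg : P.natDegree ≤ r := natDegree_comp_le.trans <| by
    have : (C (1 / 2 : ℝ) * (1 - X)).natDegree ≤ 1 := by compute_degree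
    nlinarith
  set θ₀ := arccos (1 - 2 * x₀)
  set θ := arccos (1 - 2 * x)
  set h := π / (3 * r)
  have hcosθ₀ : cos θ₀ = 1 - 2 * x₀ := cos_arccos (by linarith [hx₀.2]) (by linarith [hx₀.1])
  have hθ₀ : θ₀ ≤ π / 2 := arccos_le_pi_div_two.2 (by linarith [hx₀.2])
  have hh0 : 0 ≤ h := by positivity
  have hh : h ≤ π / 3 := div_le_div_of_nonneg_left pi_pos.le (by norm_num) (by linarith)
  have hθ₀h : θ₀ + h ≤ π := by linarith [pi_pos]
  have hlen : x ≤ (1 - cos (θ₀ + h)) / 2 := by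
    have h1 := one_div_le_sin_pi_div_sq hr'
    have h2 := sin_half_sq_le_cos_sub_cos (arccos_nonneg _) hh0 hθ₀h
    rw [show h / 2 = π / (6 * r) by ring] at h2
    linarith [hx.2]
  have hcosθ : cos θ = 1 - 2 * x :=
    cos_arccos (by linarith [neg_one_le_cos (θ₀ + h)]) (by linarith [hx.1, hx₀.1])
  have hθ₀θ : θ₀ ≤ θ := arccos_le_arccos (by linarith [hx.1])
  have hθθ₀ : θ ≤ θ₀ + h := by
    rw [← arccos_cos (by linarith [arccos_nonneg (1 - 2 * x₀)]) hθ₀h]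
    exact arccos_le_arccos (by linarith)
  have hfmax : ∀ φ, |P.eval (cos φ)| ≤ P.eval (cos θ₀) := fun φ => by
    rw [hP, hP, hcosθ₀, show (1 - (1 - 2 * x₀)) / 2 = x₀ by ring]
    exact hmax _ ⟨by linarith [cos_le_one φ], by linarith [neg_one_le_cos φ]⟩
  have key := mul_cos_le_of_mem_trigPoly (eval_cos_mem hPdeg) hfmax (sub_nonneg.2 hθ₀θ)
    (s := θ - θ₀) (by
      have : π / (3 * r) ≤ π / r :=
        div_le_div_of_nonneg_left pi_pos.le (by positivity) (by linarith)
      linarith)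
  have hcos : 1 / 2 ≤ cos (r * (θ - θ₀)) := by
    rw [← cos_pi_div_three]
    refine cos_le_cos_of_nonneg_of_le_pi (by positivity) (by linarith [pi_pos]) ?_
    calc (r : ℝ) * (θ - θ₀) ≤ r * h := by gcongr; linarith
      _ = π / 3 := by simp only [h]; field_simp
  rw [add_sub_cancel, hP, hP, hcosθ, hcosθ₀, sub_sub_cancel, sub_sub_cancel,
    mul_div_cancel_left₀ _ two_ne_zero, mul_div_cancel_left₀ _ two_ne_zero] at key
  nlinarith [(abs_nonneg _).trans (hmax x₀ ⟨hx₀.1, by linarith [hx₀.2]⟩)]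

theorem abs_eval_le_two_mul_abs_eval {r : ℕ} (hr : 1 ≤ r) {v : ℝ[X]} (hv : v.natDegree ≤ r) {x₀ : ℝ}
    (hx₀ : x₀ ∈ Icc (0 : ℝ) (1 / 2)) (hmax : ∀ x ∈ Icc (0 : ℝ) 1, |v.eval x| ≤ |v.eval x₀|)
    {x : ℝ} (hx : x ∈ Icc x₀ (x₀ + 1 / (2 * (1 + 2 * (r : ℝ) ^ 2)))) :
    |v.eval x₀| ≤ 2 * |v.eval x| := by
  rcases abs_choice (v.eval x₀) with h | h
  · have := le_two_mul_eval_of_forall_abs_eval_le hr hv hx₀ (h ▸ hmax) hx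
    linarith [le_abs_self (v.eval x)]
  · have := le_two_mul_eval_of_forall_abs_eval_le hr ((natDegree_neg v).trans_le hv) hx₀
      (fun y hy => by simpa [h] using hmax y hy) hx
    rw [eval_neg, eval_neg] at this
    linarith [neg_abs_le (v.eval x)]

theorem exists_Icc_abs_eval_le_two_mul_abs_eval {r : ℕ} (hr : 1 ≤ r) {v : ℝ[X]}
    (hv : v.natDegree ≤ r) {x₀ : ℝ} (hx₀ : x₀ ∈ Icc (0 : ℝ) 1)
    (hmax : ∀ x ∈ Icc (0 : ℝ) 1, |v.eval x| ≤ |v.eval x₀|) :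
    ∃ a, 0 ≤ a ∧ a + 1 / (2 * (1 + 2 * (r : ℝ) ^ 2)) ≤ 1 ∧
      ∀ x ∈ Icc a (a + 1 / (2 * (1 + 2 * (r : ℝ) ^ 2))), |v.eval x₀| ≤ 2 * |v.eval x| := by
  set δ := 1 / (2 * (1 + 2 * (r : ℝ) ^ 2))
  have hδ : δ ≤ 1 / 2 := by
    rw [div_le_div_iff₀ (by positivity) two_pos]; nlinarith
  rcases le_or_gt x₀ (1 / 2) with h | h
  · exact ⟨x₀, hx₀.1, by linarith,
      fun x hx => abs_eval_le_two_mul_abs_eval hr hv ⟨hx₀.1, h⟩ hmax hx⟩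
  set w := v.comp (1 - X)
  have hw : ∀ y, w.eval y = v.eval (1 - y) := fun y => by simp [w]
  have hwdeg : w.natDegree ≤ r := natDegree_comp_le.trans <| by
    have : (1 - X : ℝ[X]).natDegree ≤ 1 := by compute_degree
    nlinarith
  refine ⟨x₀ - δ, by linarith, by linarith [hx₀.2], fun x hx => ?_⟩
  have := abs_eval_le_two_mul_abs_eval hr hwdeg (x₀ := 1 - x₀) ⟨by linarith [hx₀.2], by linarith⟩
    (fun y hy => by
      rw [hw, hw, sub_sub_cancel]; exact hmax _ ⟨by linarith [hy.2], by linarith [hy.1]⟩)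
    (x := 1 - x) ⟨by linarith [hx.2], by linarith [hx.1]⟩
  rwa [hw, hw, sub_sub_cancel, sub_sub_cancel] at this

/-- Lemma 4.2: for every `r ∈ ℕ` and every real polynomial `v` of degree at most `r`,
there is a subinterval `[a,b] ⊆ [0,1]` of length at least `1/(2(1 + 2r²))` on which
`|v| ≥ (1/2) sup_{[0,1]} |v|`. -/
theorem stmt_5 (r : ℕ) (v : Polynomial ℝ) (hv : v.natDegree ≤ r) :
    ∃ a b : ℝ, 0 ≤ a ∧ a ≤ b ∧ b ≤ 1 ∧
      1 / (2 * (1 + 2 * (r : ℝ) ^ 2)) ≤ b - a ∧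
      ∀ x ∈ Set.Icc a b,
        (1 / 2) * sSup ((fun t => |Polynomial.eval t v|) '' Set.Icc (0 : ℝ) 1) ≤
          |Polynomial.eval x v| := by
  obtain ⟨x₀, hx₀, hmax⟩ := isCompact_Icc.exists_isMaxOn (nonempty_Icc.2 zero_le_one)
    (v.continuous.abs.continuousOn)
  have hM : sSup ((fun t => |v.eval t|) '' Icc (0 : ℝ) 1) = |v.eval x₀| :=
    IsGreatest.csSup_eq ⟨mem_image_of_mem _ hx₀, by rintro _ ⟨y, hy, rfl⟩; exact hmax hy⟩
  rw [hM]
  rcases r.eq_zero_or_pos with rfl | hr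
  · refine ⟨0, 1, le_rfl, zero_le_one, le_rfl, by norm_num, fun x _ => ?_⟩
    rw [eq_C_of_natDegree_le_zero hv, eval_C, eval_C]
    linarith [abs_nonneg (v.coeff 0)]
  obtain ⟨a, ha0, ha1, ha⟩ := exists_Icc_abs_eval_le_two_mul_abs_eval hr hv hx₀ hmax
  exact ⟨a, _, ha0, le_add_of_nonneg_right (by positivity), ha1, by rw [add_sub_cancel_left],
    fun x hx => by linarith [ha x hx]⟩
end
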